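/- arXiv:2601.08098 — 4 statements merged into one kernel-verified Lean document; each statement's English description precedes it below -/
import Mathlib

section
/- Let p ≥ 2 and n ≥ 1 (p real, n an integer), let φ(t) = t|t|^{p-2}, and let f : ℝ → ℝ be continuously differentiable. Let u ∈ C²([0,1]) satisfy (φ(u'(r)))' + ((n-1)/r) φ(u'(r)) + f(u(r)) = 0 for 0 < r < 1, and let ψ ∈ C²([0,1]). Then the function v(r) = ψ(r) u'(r) satisfies, for 0 < r < 1, (φ'(u'(r)) v'(r))' + ((n-1)/r) φ'(u'(r)) v'(r) + f'(u(r)) v(r) = − p ψ'(r) f(u(r)) + φ(u'(r)) L_p[ψ](r) / r², where L_p[ψ](r) = (p−1) r² ψ''(r) − (n−1) r ψ'(r) + (n−1) ψ(r). -/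
/-!
Since `φ` is homogeneous of degree `p - 1`, Euler's identity `t φ'(t) = (p - 1) φ(t)` gives
`φ'(u') v' = (p - 1) ψ' φ(u') + ψ (φ(u'))'`, and the equation for `u` turns this into
`(p - 1) ψ' φ(u') - ψ ((n - 1)/r · φ(u') + f(u))`, which no longer involves `u''`.
Differentiating this expression once more and substituting the equation again for `(φ(u'))'`
yields the claim.
-/

open Set Real Filter Topology

lemma hasDerivAt_mul_abs_rpow_of_pos (p : ℝ) {t : ℝ} (ht : 0 < t) :
    HasDerivAt (fun s : ℝ => s * |s| ^ (p - 2)) ((p - 1) * |t| ^ (p - 2)) t := by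
  have hpow : HasDerivAt (fun s : ℝ => s ^ (p - 1)) ((p - 1) * |t| ^ (p - 2)) t := by
    rw [abs_of_pos ht, show p - 2 = p - 1 - 1 by ring]
    exact Real.hasDerivAt_rpow_const (Or.inl ht.ne')
  refine hpow.congr_of_eventuallyEq ?_
  filter_upwards [eventually_gt_nhds ht] with s hs
  rw [abs_of_pos hs, show p - 1 = p - 2 + 1 by ring, Real.rpow_add_one hs.ne', mul_comm]

lemma hasDerivAt_mul_abs_rpow_zero {p : ℝ} (hp : 2 ≤ p) :
    HasDerivAt (fun s : ℝ => s * |s| ^ (p - 2)) ((p - 1) * |0| ^ (p - 2)) 0 := by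
  rw [hasDerivAt_iff_tendsto_slope]
  have hslope : ∀ s ∈ ({0}ᶜ : Set ℝ),
      |s| ^ (p - 2) = slope (fun s : ℝ => s * |s| ^ (p - 2)) 0 s := by
    intro s hs
    rw [slope_def_field]
    field_simp [show s ≠ 0 from hs]
    simp
  have hcont : ContinuousAt (fun s : ℝ => |s| ^ (p - 2)) 0 :=
    (continuousAt_rpow_const _ _ (Or.inr (by linarith))).comp continuous_abs.continuousAt
  convert (hcont.tendsto.mono_left nhdsWithin_le_nhds).congr'
    (eventually_nhdsWithin_of_forall hslope) using 2
  rcases hp.eq_or_lt with rfl | hp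
  · norm_num
  · simp [zero_rpow (by linarith : p - 2 ≠ 0)]

lemma hasDerivAt_mul_abs_rpow {p : ℝ} (hp : 2 ≤ p) (t : ℝ) :
    HasDerivAt (fun s : ℝ => s * |s| ^ (p - 2)) ((p - 1) * |t| ^ (p - 2)) t := by
  rcases lt_trichotomy t 0 with ht | rfl | ht
  · -- the function is odd
    have h := ((hasDerivAt_mul_abs_rpow_of_pos p (neg_pos.2 ht)).comp t (hasDerivAt_neg t)).neg
    refine (h.congr_of_eventuallyEq (.of_forall fun s => ?_)).congr_deriv ?_ <;> simp
  · exact hasDerivAt_mul_abs_rpow_zero hp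
  · exact hasDerivAt_mul_abs_rpow_of_pos p ht

section RadialEquation

variable {p k : ℝ} {φ φd f u u' u'' ψ ψ' ψ'' : ℝ → ℝ} {r : ℝ}

lemma flux_eq_of_radial_eq (hφ : HasDerivAt φ (φd (u' r)) (u' r)) (hu' : HasDerivAt u' (u'' r) r)
    (hode : deriv (fun s => φ (u' s)) r + k / r * φ (u' r) + f (u r) = 0) :
    φd (u' r) * u'' r = -(k / r * φ (u' r)) - f (u r) := by
  have hφu : HasDerivAt (fun s => φ (u' s)) (φd (u' r) * u'' r) r := hφ.comp r hu'
  rw [hφu.deriv] at hode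
  linarith

variable (ψ ψ') in
lemma linearized_flux_eq (hEuler : u' r * φd (u' r) = (p - 1) * φ (u' r))
    (hflux : φd (u' r) * u'' r = -(k / r * φ (u' r)) - f (u r)) :
    φd (u' r) * (ψ' r * u' r + ψ r * u'' r)
      = (p - 1) * ψ' r * φ (u' r) - ψ r * (k / r * φ (u' r) + f (u r)) := by
  linear_combination ψ' r * hEuler + ψ r * hflux

lemma hasDerivAt_linearized_flux (hr : r ≠ 0) (hφ : HasDerivAt φ (φd (u' r)) (u' r))
    (hf : DifferentiableAt ℝ f (u r)) (hu : HasDerivAt u (u' r) r)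
    (hu' : HasDerivAt u' (u'' r) r) (hψ : HasDerivAt ψ (ψ' r) r)
    (hψ' : HasDerivAt ψ' (ψ'' r) r) :
    HasDerivAt (fun s => (p - 1) * ψ' s * φ (u' s) - ψ s * (k / s * φ (u' s) + f (u s)))
      ((p - 1) * (ψ'' r * φ (u' r) + ψ' r * (φd (u' r) * u'' r))
        - (ψ' r * (k / r * φ (u' r) + f (u r))
          + ψ r * (-(k / r ^ 2) * φ (u' r) + k / r * (φd (u' r) * u'' r)
            + deriv f (u r) * u' r))) r := by
  have hφu : HasDerivAt (fun s => φ (u' s)) (φd (u' r) * u'' r) r := hφ.comp r hu'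
  have hkinv : HasDerivAt (fun s => k / s) (-(k / r ^ 2)) r := by
    simpa [div_eq_mul_inv] using (hasDerivAt_inv hr).const_mul k
  have hsource : HasDerivAt (fun s => k / s * φ (u' s) + f (u s))
      (-(k / r ^ 2) * φ (u' r) + k / r * (φd (u' r) * u'' r) + deriv f (u r) * u' r) r :=
    (hkinv.mul hφu).add (hf.hasDerivAt.comp r hu)
  exact (((hψ'.const_mul (p - 1)).mul hφu).sub (hψ.mul hsource)).congr_deriv (by ring)

end RadialEquation

theorem pLaplace_linearization_general
    (p : ℝ) (hp : 2 ≤ p) (n : ℕ)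
    (φ φd : ℝ → ℝ)
    (hφ : ∀ t : ℝ, φ t = t * |t| ^ (p - 2))
    (hφd : ∀ t : ℝ, φd t = (p - 1) * |t| ^ (p - 2))
    (f : ℝ → ℝ) (hf : ContDiff ℝ 1 f)
    (u u' u'' : ℝ → ℝ)
    (hu : ∀ r ∈ Icc (0:ℝ) 1, HasDerivAt u (u' r) r)
    (hu' : ∀ r ∈ Icc (0:ℝ) 1, HasDerivAt u' (u'' r) r)
    (ψ ψ' ψ'' : ℝ → ℝ)
    (hψ : ∀ r ∈ Icc (0:ℝ) 1, HasDerivAt ψ (ψ' r) r)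
    (hψ' : ∀ r ∈ Icc (0:ℝ) 1, HasDerivAt ψ' (ψ'' r) r)
    (hode : ∀ r ∈ Ioo (0:ℝ) 1,
      deriv (fun s => φ (u' s)) r + ((n : ℝ) - 1) / r * φ (u' r) + f (u r) = 0) :
    ∀ r ∈ Ioo (0:ℝ) 1,
      deriv (fun s => φd (u' s) * (ψ' s * u' s + ψ s * u'' s)) r
          + ((n : ℝ) - 1) / r * (φd (u' r) * (ψ' r * u' r + ψ r * u'' r))
          + deriv f (u r) * (ψ r * u' r)
        = -p * ψ' r * f (u r)
          + φ (u' r)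
            * ((p - 1) * r ^ 2 * ψ'' r - ((n : ℝ) - 1) * r * ψ' r
                + ((n : ℝ) - 1) * ψ r) / r ^ 2 := by
  have hφ' (t : ℝ) : HasDerivAt φ (φd t) t := by
    rw [funext hφ, hφd]
    exact hasDerivAt_mul_abs_rpow hp t
  have hflux (s : ℝ) (hs : s ∈ Ioo (0:ℝ) 1) :
      φd (u' s) * u'' s = -(((n : ℝ) - 1) / s * φ (u' s)) - f (u s) :=
    flux_eq_of_radial_eq (hφ' _) (hu' s (Ioo_subset_Icc_self hs)) (hode s hs)
  have hEuler (t : ℝ) : t * φd t = (p - 1) * φ t := by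
    rw [hφ, hφd]
    ring
  have hv (s : ℝ) (hs : s ∈ Ioo (0:ℝ) 1) :=
    linearized_flux_eq ψ ψ' (hEuler (u' s)) (hflux s hs)
  intro r hr
  have hrI := Ioo_subset_Icc_self hr
  have hv_near : (fun s => φd (u' s) * (ψ' s * u' s + ψ s * u'' s)) =ᶠ[𝓝 r] _ :=
    eventually_of_mem (Ioo_mem_nhds hr.1 hr.2) hv
  rw [hv_near.deriv_eq, (hasDerivAt_linearized_flux hr.1.ne' (hφ' _)
    (hf.differentiable one_ne_zero _) (hu r hrI) (hu' r hrI) (hψ r hrI) (hψ' r hrI)).deriv,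
    hv r hr, hflux r hr]
  field_simp [hr.1.ne']
  ring

/-- The linearization lemma for the p-Laplace equation (equation (3.4)).
`φ(t) = t|t|^{p-2}`, `φ'(t) = (p-1)|t|^{p-2}` (denoted `φd`), `u` is C² on
`[0,1]` solving `(φ(u'))' + ((n-1)/r) φ(u') + f(u) = 0` on `(0,1)`, and
`ψ` is C² on `[0,1]`.  Then `v = ψ u'` (with `v' = ψ' u' + ψ u''`) satisfies
`(φ'(u') v')' + ((n-1)/r) φ'(u') v' + f'(u) v
  = -p ψ' f(u) + φ(u') L_p[ψ] / r²` on `(0,1)`,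
where `L_p[ψ] = (p-1) r² ψ'' - (n-1) r ψ' + (n-1) ψ`. -/
theorem pLaplace_linearization
    (p : ℝ) (hp : 2 ≤ p) (n : ℕ) (hn : 1 ≤ n)
    (φ φd : ℝ → ℝ)
    (hφ : ∀ t : ℝ, φ t = t * |t| ^ (p - 2))
    (hφd : ∀ t : ℝ, φd t = (p - 1) * |t| ^ (p - 2))
    (f : ℝ → ℝ) (hf : ContDiff ℝ 1 f)
    (u u' u'' : ℝ → ℝ)
    (hu : ∀ r ∈ Icc (0:ℝ) 1, HasDerivAt u (u' r) r)
    (hu' : ∀ r ∈ Icc (0:ℝ) 1, HasDerivAt u' (u'' r) r)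
    (hu''c : ContinuousOn u'' (Icc (0:ℝ) 1))
    (ψ ψ' ψ'' : ℝ → ℝ)
    (hψ : ∀ r ∈ Icc (0:ℝ) 1, HasDerivAt ψ (ψ' r) r)
    (hψ' : ∀ r ∈ Icc (0:ℝ) 1, HasDerivAt ψ' (ψ'' r) r)
    (hψ''c : ContinuousOn ψ'' (Icc (0:ℝ) 1))
    (hode : ∀ r ∈ Ioo (0:ℝ) 1,
      deriv (fun s => φ (u' s)) r + ((n : ℝ) - 1) / r * φ (u' r) + f (u r) = 0) :
    ∀ r ∈ Ioo (0:ℝ) 1,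
      deriv (fun s => φd (u' s) * (ψ' s * u' s + ψ s * u'' s)) r
          + ((n : ℝ) - 1) / r * (φd (u' r) * (ψ' r * u' r + ψ r * u'' r))
          + deriv f (u r) * (ψ r * u' r)
        = -p * ψ' r * f (u r)
          + φ (u' r)
            * ((p - 1) * r ^ 2 * ψ'' r - ((n : ℝ) - 1) * r * ψ' r
                + ((n : ℝ) - 1) * ψ r) / r ^ 2 :=
  pLaplace_linearization_general p hp n φ φd hφ hφd f hf u u' u'' hu hu' ψ ψ' ψ'' hψ hψ' hode
end

section
/- Let f : ℝ → ℝ be continuously differentiable and F(u) = ∫₀ᵘ f(t) dt. Let u ∈ C²([0,1]) satisfy u''(r) + (2/r) u'(r) + f(u(r)) = 0 for 0 < r < 1, with u'(0) = u(1) = 0, and let ψ ∈ C³([0,1]) with ψ(0) = 0. Then ∫₀¹ [ 2 (ψ(r) r²)' F(u(r)) + ( 2 ψ'(r) r² − (ψ(r) r²)' ) u(r) f(u(r)) + (1/2) u(r)² ψ'''(r) r² ] dr = ψ(1) (u'(1))². -/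
open Set Real

/-!
Multiplying the equation by the Pohozhaev-type multiplier `2 ψ r² u' + (2 ψ r - ψ' r²) u` turns the
integrand into the exact derivative of the flux `pohozhaevFlux` below, so the integral is the
difference of the flux at the endpoints. At `r = 0` every term carries `ψ 0 = 0` or a power of `r`,
and at `r = 1` only the kinetic term `ψ 1 (u' 1)²` survives because `u 1 = 0` and `F 0 = 0`.
-/

noncomputable section Pohozhaev

variable (f F u u' ψ ψ' ψ'' ψ''' : ℝ → ℝ)

def pohozhaevIntegrand (r : ℝ) : ℝ :=
  2 * (ψ' r * r ^ 2 + 2 * ψ r * r) * F (u r)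
    + (2 * ψ' r * r ^ 2 - (ψ' r * r ^ 2 + 2 * ψ r * r)) * (u r * f (u r))
    + 1 / 2 * (u r) ^ 2 * ψ''' r * r ^ 2

def pohozhaevFlux (r : ℝ) : ℝ :=
  2 * ψ r * r ^ 2 * (u' r ^ 2 / 2 + F (u r))
    + (2 * ψ r * r - ψ' r * r ^ 2) * (u r * u' r)
    + (2 * ψ r + ψ'' r * r ^ 2 - 2 * ψ' r * r) * u r ^ 2 / 2

theorem pohozhaevFlux_zero (hψ0 : ψ 0 = 0) : pohozhaevFlux F u u' ψ ψ' ψ'' 0 = 0 := by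
  simp [pohozhaevFlux, hψ0]

theorem pohozhaevFlux_one (hF0 : F 0 = 0) (hu1 : u 1 = 0) :
    pohozhaevFlux F u u' ψ ψ' ψ'' 1 = ψ 1 * u' 1 ^ 2 := by
  simp only [pohozhaevFlux, hu1, hF0]
  ring

theorem hasDerivAt_pohozhaevFlux {u'' : ℝ → ℝ} {r : ℝ} (hr : r ≠ 0)
    (hF : HasDerivAt F (f (u r)) (u r)) (hu : HasDerivAt u (u' r) r)
    (hu' : HasDerivAt u' (u'' r) r) (hψ : HasDerivAt ψ (ψ' r) r)
    (hψ' : HasDerivAt ψ' (ψ'' r) r) (hψ'' : HasDerivAt ψ'' (ψ''' r) r)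
    (hode : u'' r + 2 / r * u' r + f (u r) = 0) :
    HasDerivAt (pohozhaevFlux F u u' ψ ψ' ψ'') (pohozhaevIntegrand f F u ψ ψ' ψ''' r) r := by
  have hsq : HasDerivAt (fun x : ℝ => x ^ 2) (2 * r) r := by
    simpa using hasDerivAt_pow 2 r
  have hid : HasDerivAt (fun x : ℝ => x) 1 r := hasDerivAt_id r
  have hE := ((hψ.const_mul 2).mul hsq).mul (((hu'.pow 2).div_const 2).add (hF.comp r hu))
  have hC := (((hψ.const_mul 2).mul hid).sub (hψ'.mul hsq)).mul (hu.mul hu')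
  have hQ := ((((hψ.const_mul 2).add (hψ''.mul hsq)).sub ((hψ'.const_mul 2).mul hid)).mul
    (hu.pow 2)).div_const 2
  have hu''r : u'' r = -(2 / r * u' r) - f (u r) := by linarith
  refine (show HasDerivAt (pohozhaevFlux F u u' ψ ψ' ψ'') _ r from
    (hE.add hC).add hQ).congr_deriv ?_
  simp only [pohozhaevIntegrand, Pi.add_apply, Pi.sub_apply, Pi.mul_apply, Pi.pow_apply,
    Function.comp_apply, hu''r]
  field_simp
  ring

variable {f F u u' ψ ψ' ψ'' ψ'''} {s : Set ℝ}

theorem continuousOn_pohozhaevFlux (hF : Continuous F) (hu : ContinuousOn u s)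
    (hu' : ContinuousOn u' s) (hψ : ContinuousOn ψ s) (hψ' : ContinuousOn ψ' s)
    (hψ'' : ContinuousOn ψ'' s) : ContinuousOn (pohozhaevFlux F u u' ψ ψ' ψ'') s := by
  unfold pohozhaevFlux
  fun_prop

theorem continuousOn_pohozhaevIntegrand (hf : Continuous f) (hF : Continuous F)
    (hu : ContinuousOn u s) (hψ : ContinuousOn ψ s) (hψ' : ContinuousOn ψ' s)
    (hψ''' : ContinuousOn ψ''' s) : ContinuousOn (pohozhaevIntegrand f F u ψ ψ' ψ''') s := by
  unfold pohozhaevIntegrand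
  fun_prop

end Pohozhaev

theorem pohozhaev_dim3_general
    (f : ℝ → ℝ) (hf : ContDiff ℝ 1 f)
    (F : ℝ → ℝ) (hF : ∀ x : ℝ, F x = ∫ t in (0:ℝ)..x, f t)
    (u u' u'' : ℝ → ℝ)
    (hu : ∀ r ∈ Icc (0:ℝ) 1, HasDerivAt u (u' r) r)
    (hu' : ∀ r ∈ Icc (0:ℝ) 1, HasDerivAt u' (u'' r) r)
    (ψ ψ' ψ'' ψ''' : ℝ → ℝ)
    (hψ : ∀ r ∈ Icc (0:ℝ) 1, HasDerivAt ψ (ψ' r) r)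
    (hψ' : ∀ r ∈ Icc (0:ℝ) 1, HasDerivAt ψ' (ψ'' r) r)
    (hψ'' : ∀ r ∈ Icc (0:ℝ) 1, HasDerivAt ψ'' (ψ''' r) r)
    (hψ'''c : ContinuousOn ψ''' (Icc (0:ℝ) 1))
    (hψ0 : ψ 0 = 0)
    (hode : ∀ r ∈ Ioo (0:ℝ) 1, u'' r + 2 / r * u' r + f (u r) = 0)
    (hbc1 : u 1 = 0) :
    ∫ r in (0:ℝ)..1,
        (2 * (ψ' r * r ^ 2 + 2 * ψ r * r) * F (u r)
          + (2 * ψ' r * r ^ 2 - (ψ' r * r ^ 2 + 2 * ψ r * r)) * (u r * f (u r))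
          + 1 / 2 * (u r) ^ 2 * ψ''' r * r ^ 2)
      = ψ 1 * (u' 1) ^ 2 := by
  have hF' (x : ℝ) : HasDerivAt F (f x) x := by
    rw [funext hF]; exact (hf.continuous.integral_hasStrictDerivAt 0 x).hasDerivAt
  have hFc : Continuous F := continuous_iff_continuousAt.2 fun x => (hF' x).continuousAt
  have hderiv (r : ℝ) (hr : r ∈ Ioo (0:ℝ) 1) :
      HasDerivAt (pohozhaevFlux F u u' ψ ψ' ψ'') (pohozhaevIntegrand f F u ψ ψ' ψ''' r) r := by
    have hr' := Ioo_subset_Icc_self hr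
    exact hasDerivAt_pohozhaevFlux f F u u' ψ ψ' ψ'' ψ''' hr.1.ne' (hF' _) (hu r hr') (hu' r hr')
      (hψ r hr') (hψ' r hr') (hψ'' r hr') (hode r hr)
  have hint : IntervalIntegrable (pohozhaevIntegrand f F u ψ ψ' ψ''') MeasureTheory.volume 0 1 :=
    (continuousOn_pohozhaevIntegrand hf.continuous hFc (HasDerivAt.continuousOn hu)
      (HasDerivAt.continuousOn hψ) (HasDerivAt.continuousOn hψ') hψ'''c).intervalIntegrable_of_Icc
      zero_le_one
  have hF0 : F 0 = 0 := by simp [hF]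
  calc _ = pohozhaevFlux F u u' ψ ψ' ψ'' 1 - pohozhaevFlux F u u' ψ ψ' ψ'' 0 :=
        intervalIntegral.integral_eq_sub_of_hasDeriv_right_of_le zero_le_one
          (continuousOn_pohozhaevFlux hFc (HasDerivAt.continuousOn hu) (HasDerivAt.continuousOn hu')
            (HasDerivAt.continuousOn hψ) (HasDerivAt.continuousOn hψ')
            (HasDerivAt.continuousOn hψ''))
          (fun r hr => (hderiv r hr).hasDerivWithinAt) hint
    _ = ψ 1 * u' 1 ^ 2 := by
        rw [pohozhaevFlux_one F u u' ψ ψ' ψ'' hF0 hbc1, pohozhaevFlux_zero F u u' ψ ψ' ψ'' hψ0,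
          sub_zero]

/-- The simplified generalized Pohozhaev identity in dimension `n = 3`.
`u` is C² on `[0,1]`, solves `u'' + (2/r) u' + f(u) = 0` on `(0,1)` with
`u'(0) = u(1) = 0`, and `ψ` is C³ on `[0,1]` with `ψ(0) = 0`.  Here
`(ψ r²)' = ψ' r² + 2 ψ r` has been expanded. -/
theorem pohozhaev_dim3
    (f : ℝ → ℝ) (hf : ContDiff ℝ 1 f)
    (F : ℝ → ℝ) (hF : ∀ x : ℝ, F x = ∫ t in (0:ℝ)..x, f t)
    (u u' u'' : ℝ → ℝ)
    (hu : ∀ r ∈ Icc (0:ℝ) 1, HasDerivAt u (u' r) r)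
    (hu' : ∀ r ∈ Icc (0:ℝ) 1, HasDerivAt u' (u'' r) r)
    (hu''c : ContinuousOn u'' (Icc (0:ℝ) 1))
    (ψ ψ' ψ'' ψ''' : ℝ → ℝ)
    (hψ : ∀ r ∈ Icc (0:ℝ) 1, HasDerivAt ψ (ψ' r) r)
    (hψ' : ∀ r ∈ Icc (0:ℝ) 1, HasDerivAt ψ' (ψ'' r) r)
    (hψ'' : ∀ r ∈ Icc (0:ℝ) 1, HasDerivAt ψ'' (ψ''' r) r)
    (hψ'''c : ContinuousOn ψ''' (Icc (0:ℝ) 1))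
    (hψ0 : ψ 0 = 0)
    (hode : ∀ r ∈ Ioo (0:ℝ) 1, u'' r + 2 / r * u' r + f (u r) = 0)
    (hbc0 : u' 0 = 0) (hbc1 : u 1 = 0) :
    ∫ r in (0:ℝ)..1,
        (2 * (ψ' r * r ^ 2 + 2 * ψ r * r) * F (u r)
          + (2 * ψ' r * r ^ 2 - (ψ' r * r ^ 2 + 2 * ψ r * r)) * (u r * f (u r))
          + 1 / 2 * (u r) ^ 2 * ψ''' r * r ^ 2)
      = ψ 1 * (u' 1) ^ 2 :=
  pohozhaev_dim3_general f hf F hF u u' u'' hu hu' ψ ψ' ψ'' ψ''' hψ hψ' hψ'' hψ'''c hψ0 hode hbc1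
end

section
/- Let q > p ≥ 5 be real numbers and λ ∈ (0, π²/4]. If u ∈ C²([0,1]) satisfies u''(r) + (2/r) u'(r) + λ u(r) + u(r)|u(r)|^{p-1} + u(r)|u(r)|^{q-1} = 0 for 0 < r < 1, with u'(0) = u(1) = 0, then u ≡ 0 on [0,1]. -/
/-!
Write `v = r u`, so that the equation reads `v'' + λ v + r f(u) = 0` with
`f(u) = u|u|^{p-1} + u|u|^{q-1}`, and let `F` be the primitive of `f` vanishing at `0`. For `ω = 2√λ ∈ (0, π]` the sine-weighted
Pohozaev functional
  `G(r) = sin(ωr) (v'²/2 - λ v²/2 + r² F(u)) - (ω/2) cos(ωr) v v'`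
has derivative `G' = r (ωr cos(ωr) (F + u f/2) + sin(ωr) (2F - u f))`: the terms in `v v'` cancel
because `ω² = 4λ`. For a power `f = u|u|^{s-1}` the bracket is
`|u|^{s+1}/(s+1) ((s+3)/2 · ωr cos(ωr) - (s-1) sin(ωr))`, which is negative when `u ≠ 0` as soon as
`s ≥ 5`, since `θ cos θ < sin θ` on `(0, π)`. So `G` is nonincreasing, while `G(0) = 0` and
`G(1) = sin ω · u'(1)²/2 ≥ 0`; hence `G` is constant, `G' ≡ 0`, and `u ≡ 0`.
-/

open Set Real

lemma mul_cos_lt_sin {θ : ℝ} (h0 : 0 < θ) (hπ : θ < π) : θ * cos θ < sin θ := by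
  rcases lt_or_ge θ (π / 2) with hθ | hθ
  · have hcos : 0 < cos θ := cos_pos_of_mem_Ioo ⟨by linarith, hθ⟩
    have := lt_tan h0 hθ
    rwa [tan_eq_sin_div_cos, lt_div_iff₀ hcos] at this
  · have hcos : cos θ ≤ 0 := cos_nonpos_of_pi_div_two_le_of_le hθ (by linarith)
    nlinarith [sin_pos_of_pos_of_lt_pi h0 hπ]

-- `G(r)` with `v = r u` and `v' = u + r u'` written out
noncomputable def sinePohozaev (ω lam : ℝ) (F u u' : ℝ → ℝ) (r : ℝ) : ℝ :=
  sin (ω * r) * ((u r + r * u' r) ^ 2 / 2 - lam * (r * u r) ^ 2 / 2 + r ^ 2 * F (u r))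
    - ω / 2 * cos (ω * r) * (r * u r * (u r + r * u' r))

noncomputable def sinePohozaevDensity (f F : ℝ → ℝ) (θ x : ℝ) : ℝ :=
  θ * cos θ * (F x + x * f x / 2) + sin θ * (2 * F x - x * f x)

def SineSupercritical (f F : ℝ → ℝ) : Prop :=
  ∀ x ≠ 0, ∀ θ ∈ Ioo 0 π, sinePohozaevDensity f F θ x < 0

section SineSupercritical

variable {f F g G : ℝ → ℝ}

lemma SineSupercritical.add (hf : SineSupercritical f F) (hg : SineSupercritical g G) :
    SineSupercritical (f + g) (F + G) := by
  intro x hx θ hθ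
  have := add_lt_add (hf x hx θ hθ) (hg x hx θ hθ)
  simp only [sinePohozaevDensity, Pi.add_apply] at this ⊢
  linarith

lemma SineSupercritical.density_nonpos (hf : SineSupercritical f F) (hF : F 0 = 0) {θ : ℝ}
    (hθ : θ ∈ Ioo 0 π) (x : ℝ) : sinePohozaevDensity f F θ x ≤ 0 := by
  rcases eq_or_ne x 0 with rfl | hx
  · simp [sinePohozaevDensity, hF]
  · exact (hf x hx θ hθ).le

end SineSupercritical

lemma mul_mul_abs_rpow_sub_one {x : ℝ} (hx : x ≠ 0) (s : ℝ) :
    x * (x * |x| ^ (s - 1)) = |x| ^ (s + 1) := by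
  rw [show s + 1 = 2 + (s - 1) by ring, rpow_add (abs_pos.mpr hx), rpow_two, sq_abs]
  ring

lemma hasDerivAt_abs_rpow_div (s x : ℝ) (hs : 0 < s) :
    HasDerivAt (fun y => |y| ^ (s + 1) / (s + 1)) (x * |x| ^ (s - 1)) x := by
  have h := (hasDerivAt_abs_rpow x (by linarith : 1 < s + 1)).div_const (s + 1)
  refine h.congr_deriv ?_
  rw [show s + 1 - 2 = s - 1 by ring]
  field_simp

lemma sineSupercritical_rpow {s : ℝ} (hs : 5 ≤ s) :
    SineSupercritical (fun x => x * |x| ^ (s - 1)) (fun x => |x| ^ (s + 1) / (s + 1)) := by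
  intro x hx θ ⟨hθ0, hθπ⟩
  have hA : 0 < |x| ^ (s + 1) := rpow_pos_of_pos (abs_pos.mpr hx) _
  have hsin : 0 < sin θ := sin_pos_of_pos_of_lt_pi hθ0 hθπ
  have hcos := mul_cos_lt_sin hθ0 hθπ
  -- `(s + 3) / 2 ≤ s - 1` is exactly `s ≥ 5`
  have key : (s + 3) / 2 * (θ * cos θ) < (s - 1) * sin θ := by
    rcases le_or_gt 0 (θ * cos θ) with h | h
    · nlinarith
    · nlinarith
  have hdens : sinePohozaevDensity (fun x => x * |x| ^ (s - 1))
      (fun x => |x| ^ (s + 1) / (s + 1)) θ x = |x| ^ (s + 1) / (s + 1) * ((s + 3) / 2 * (θ * cos θ) - (s - 1) * sin θ) := by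
    simp only [sinePohozaevDensity, mul_mul_abs_rpow_sub_one hx]
    field_simp
    ring
  rw [hdens]
  exact mul_neg_of_pos_of_neg (by positivity) (by linarith)

section SinePohozaev

variable {ω lam : ℝ} {f F u u' u'' : ℝ → ℝ}

lemma hasDerivAt_sinePohozaev {r : ℝ} (hr : r ≠ 0) (hω : ω ^ 2 = 4 * lam)
    (hF : HasDerivAt F (f (u r)) (u r)) (hu : HasDerivAt u (u' r) r)
    (hu' : HasDerivAt u' (u'' r) r)
    (hode : u'' r + 2 / r * u' r + lam * u r + f (u r) = 0) :
    HasDerivAt (sinePohozaev ω lam F u u')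
      (r * sinePohozaevDensity f F (ω * r) (u r)) r := by
  have hθ : HasDerivAt (fun y => ω * y) (ω * 1) r := (hasDerivAt_id' r).const_mul ω
  have hv := (hasDerivAt_id' r).fun_mul hu
  have hv' := hu.fun_add ((hasDerivAt_id' r).fun_mul hu')
  have hFu := (hasDerivAt_pow 2 r).fun_mul (hF.comp r hu)
  have := (hθ.sin.fun_mul (((hv'.fun_pow 2).div_const 2).fun_sub
    (((hv.fun_pow 2).const_mul lam).div_const 2) |>.fun_add hFu)).fun_sub
    ((hθ.cos.const_mul (ω / 2)).fun_mul (hv.fun_mul hv'))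
  refine this.congr_deriv ?_
  field_simp at hode
  simp only [sinePohozaevDensity, Function.comp_apply]
  linear_combination (sin (ω * r) * (u r + r * u' r) - ω / 2 * cos (ω * r) * (r * u r)) * hode
    + (sin (ω * r) * (r * u r) * (u r + r * u' r) / 2) * hω

lemma continuousOn_sinePohozaev {s : Set ℝ} (hF : Continuous F) (hu : ContinuousOn u s)
    (hu' : ContinuousOn u' s) : ContinuousOn (sinePohozaev ω lam F u u') s := by
  unfold sinePohozaev
  fun_prop

lemma sinePohozaev_zero : sinePohozaev ω lam F u u' 0 = 0 := by
  simp [sinePohozaev]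

lemma sinePohozaev_one (hF : F 0 = 0) (hu : u 1 = 0) :
    sinePohozaev ω lam F u u' 1 = sin ω * u' 1 ^ 2 / 2 := by
  simp [sinePohozaev, hF, hu, mul_div_assoc]

end SinePohozaev

lemma mul_mem_Ioo_pi {ω r : ℝ} (hω0 : 0 < ω) (hωπ : ω ≤ π) (hr : r ∈ Ioo (0:ℝ) 1) :
    ω * r ∈ Ioo 0 π :=
  ⟨mul_pos hω0 hr.1, by nlinarith [hr.1, hr.2]⟩

section RadialSolution

variable {ω lam : ℝ} {f F u u' : ℝ → ℝ}

lemma SineSupercritical.antitoneOn_sinePohozaev (hf : SineSupercritical f F) (hF0 : F 0 = 0)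
    (hFc : Continuous F) (hω0 : 0 < ω) (hωπ : ω ≤ π) (hu : ContinuousOn u (Icc 0 1))
    (hu' : ContinuousOn u' (Icc 0 1))
    (hG : ∀ r ∈ Ioo (0:ℝ) 1, HasDerivAt (sinePohozaev ω lam F u u')
      (r * sinePohozaevDensity f F (ω * r) (u r)) r) :
    AntitoneOn (sinePohozaev ω lam F u u') (Icc 0 1) := by
  refine antitoneOn_of_hasDerivWithinAt_nonpos (convex_Icc 0 1)
    (f' := fun r => r * sinePohozaevDensity f F (ω * r) (u r))
    (continuousOn_sinePohozaev hFc hu hu') ?_ ?_ <;> rw [interior_Icc]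
  · exact fun r hr => (hG r hr).hasDerivWithinAt
  · exact fun r hr => mul_nonpos_of_nonneg_of_nonpos hr.1.le
      (hf.density_nonpos hF0 (mul_mem_Ioo_pi hω0 hωπ hr) _)

lemma sinePohozaev_eqOn_zero (hF0 : F 0 = 0) (hω0 : 0 ≤ ω) (hωπ : ω ≤ π) (hu1 : u 1 = 0)
    (hG : AntitoneOn (sinePohozaev ω lam F u u') (Icc 0 1)) :
    EqOn (sinePohozaev ω lam F u u') 0 (Icc 0 1) := by
  intro r hr
  have hG0 : sinePohozaev ω lam F u u' 0 = 0 := sinePohozaev_zero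
  have hG1 : 0 ≤ sinePohozaev ω lam F u u' 1 := by
    rw [sinePohozaev_one hF0 hu1]
    have := sin_nonneg_of_nonneg_of_le_pi hω0 hωπ
    positivity
  have := hG (left_mem_Icc.2 zero_le_one) hr hr.1
  have := hG hr (right_mem_Icc.2 zero_le_one) hr.2
  simp only [Pi.zero_apply]
  linarith

end RadialSolution

theorem eqOn_zero_of_sineSupercritical {f F u u' u'' : ℝ → ℝ} {lam : ℝ}
    (hF : ∀ x, HasDerivAt F (f x) x) (hF0 : F 0 = 0) (hf : SineSupercritical f F)
    (hlam : lam ∈ Ioc 0 (π ^ 2 / 4))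
    (hu : ∀ r ∈ Icc (0:ℝ) 1, HasDerivAt u (u' r) r)
    (hu' : ∀ r ∈ Icc (0:ℝ) 1, HasDerivAt u' (u'' r) r)
    (hode : ∀ r ∈ Ioo (0:ℝ) 1, u'' r + 2 / r * u' r + lam * u r + f (u r) = 0)
    (hu1 : u 1 = 0) :
    EqOn u 0 (Icc 0 1) := by
  obtain ⟨hlam0, hlamπ⟩ := hlam
  set ω := 2 * √lam
  have hω : ω ^ 2 = 4 * lam := by rw [mul_pow, sq_sqrt hlam0.le]; ring
  have hω0 : 0 < ω := by positivity
  have hωπ : ω ≤ π := (pow_le_pow_iff_left₀ hω0.le pi_pos.le two_ne_zero).1 (by linarith)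
  have hG' : ∀ r ∈ Ioo (0:ℝ) 1, HasDerivAt (sinePohozaev ω lam F u u')
      (r * sinePohozaevDensity f F (ω * r) (u r)) r := fun r hr =>
    hasDerivAt_sinePohozaev hr.1.ne' hω (hF _) (hu r (Ioo_subset_Icc_self hr))
      (hu' r (Ioo_subset_Icc_self hr)) (hode r hr)
  have hucont : ContinuousOn u (Icc 0 1) := fun r hr => (hu r hr).continuousAt.continuousWithinAt
  have hu'cont : ContinuousOn u' (Icc 0 1) := fun r hr =>
    (hu' r hr).continuousAt.continuousWithinAt
  have hFcont : Continuous F := continuous_iff_continuousAt.2 fun x => (hF x).continuousAt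
  have hG_zero := sinePohozaev_eqOn_zero hF0 hω0.le hωπ hu1
    (hf.antitoneOn_sinePohozaev hF0 hFcont hω0 hωπ hucont hu'cont hG')
  have hu_Ioo : EqOn u 0 (Ioo 0 1) := by
    intro r hr
    by_contra hur
    have hG'0 : HasDerivAt (sinePohozaev ω lam F u u') 0 r :=
      (hasDerivAt_const r 0).congr_of_eventuallyEq <| Filter.eventually_of_mem
        (Ioo_mem_nhds hr.1 hr.2) fun y hy => hG_zero (Ioo_subset_Icc_self hy)
    have hneg := mul_neg_of_pos_of_neg hr.1 (hf _ hur _ (mul_mem_Ioo_pi hω0 hωπ hr))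
    exact hneg.ne ((hG' r hr).unique hG'0)
  exact hu_Ioo.of_subset_closure hucont continuousOn_const Ioo_subset_Icc_self
    (closure_Ioo zero_ne_one).ge

theorem brezis_nirenberg_nonexistence_two_powers_general
    (p q : ℝ) (hp : 5 ≤ p) (hq : p < q)
    (lam : ℝ) (hlam : lam ∈ Ioc (0:ℝ) (π ^ 2 / 4))
    (u u' u'' : ℝ → ℝ)
    (hu : ∀ r ∈ Icc (0:ℝ) 1, HasDerivAt u (u' r) r)
    (hu' : ∀ r ∈ Icc (0:ℝ) 1, HasDerivAt u' (u'' r) r)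
    (hode : ∀ r ∈ Ioo (0:ℝ) 1,
      u'' r + 2 / r * u' r + lam * u r
        + u r * |u r| ^ (p - 1) + u r * |u r| ^ (q - 1) = 0)
    (hbc1 : u 1 = 0) :
    ∀ r ∈ Icc (0:ℝ) 1, u r = 0 := by
  have hq5 : 5 ≤ q := by linarith
  refine eqOn_zero_of_sineSupercritical (f := fun x => x * |x| ^ (p - 1) + x * |x| ^ (q - 1))
    (F := fun x => |x| ^ (p + 1) / (p + 1) + |x| ^ (q + 1) / (q + 1))
    (fun x => (hasDerivAt_abs_rpow_div p x (by linarith)).add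
      (hasDerivAt_abs_rpow_div q x (by linarith)))
    (by simp [zero_rpow (by linarith : p + 1 ≠ 0), zero_rpow (by linarith : q + 1 ≠ 0)])
    ((sineSupercritical_rpow hp).add (sineSupercritical_rpow hq5)) hlam hu hu' ?_ hbc1
  intro r hr
  rw [← add_assoc]
  exact hode r hr

/-- Non-existence (Remark 1 after Example 1): for `q > p ≥ 5` and
`λ ∈ (0, π²/4]`, the problem
`u'' + (2/r)u' + λu + u|u|^{p-1} + u|u|^{q-1} = 0` on `(0,1)`,
`u'(0) = u(1) = 0`, has no non-trivial C² solution. -/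
theorem brezis_nirenberg_nonexistence_two_powers
    (p q : ℝ) (hp : 5 ≤ p) (hq : p < q)
    (lam : ℝ) (hlam : lam ∈ Ioc (0:ℝ) (π ^ 2 / 4))
    (u u' u'' : ℝ → ℝ)
    (hu : ∀ r ∈ Icc (0:ℝ) 1, HasDerivAt u (u' r) r)
    (hu' : ∀ r ∈ Icc (0:ℝ) 1, HasDerivAt u' (u'' r) r)
    (hu''c : ContinuousOn u'' (Icc (0:ℝ) 1))
    (hode : ∀ r ∈ Ioo (0:ℝ) 1,
      u'' r + 2 / r * u' r + lam * u r
        + u r * |u r| ^ (p - 1) + u r * |u r| ^ (q - 1) = 0)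
    (hbc0 : u' 0 = 0) (hbc1 : u 1 = 0) :
    ∀ r ∈ Icc (0:ℝ) 1, u r = 0 :=
  brezis_nirenberg_nonexistence_two_powers_general p q hp hq lam hlam u u' u'' hu hu' hode hbc1
end

section
/- Let n ≥ 3 be an integer, let f : ℝ → ℝ be continuously differentiable, and let F(u) = ∫₀ᵘ f(t) dt. Let u ∈ C²([0,1]) satisfy u''(r) + ((n-1)/r) u'(r) + f(u(r)) = 0 for 0 < r < 1, with u'(0) = u(1) = 0. Then ∫₀¹ [ 2n F(u(r)) + (2−n) u(r) f(u(r)) ] r^{n-1} dr = (u'(1))². -/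
/-!
Along a radial solution the Pohozhaev function
`G(r) = rⁿ u'(r)² + 2 rⁿ F(u(r)) + (n - 2) rⁿ⁻¹ u(r) u'(r)`
has derivative `(2n F(u) + (2 - n) u f(u)) rⁿ⁻¹`: the equation, multiplied by `r`, turns
`r u''` into `-(n - 1) u' - r f(u)`, and the `u'²` terms then cancel. The identity is the
fundamental theorem of calculus for `G` on `[0, 1]`, where `G(0) = 0` since `n ≥ 2` and
`G(1) = u'(1)²` since `u(1) = 0`.
-/

open Set Real

def pohozhaevFunction (n : ℕ) (F u u' : ℝ → ℝ) (r : ℝ) : ℝ :=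
  r ^ n * u' r ^ 2 + 2 * r ^ n * F (u r) + ((n : ℝ) - 2) * r ^ (n - 1) * (u r * u' r)

theorem hasDerivAt_pohozhaevFunction {n : ℕ} (hn : 1 ≤ n) {f F u u' u'' : ℝ → ℝ} {r : ℝ}
    (hr : r ≠ 0) (hu : HasDerivAt u (u' r) r) (hu' : HasDerivAt u' (u'' r) r)
    (hF : HasDerivAt F (f (u r)) (u r))
    (hode : u'' r + ((n : ℝ) - 1) / r * u' r + f (u r) = 0) :
    HasDerivAt (pohozhaevFunction n F u u')
      ((2 * n * F (u r) + (2 - n) * u r * f (u r)) * r ^ (n - 1)) r := by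
  have hG : HasDerivAt (pohozhaevFunction n F u u') _ r :=
    (((hasDerivAt_pow n r).mul (hu'.pow 2)).add
      (((hasDerivAt_pow n r).const_mul 2).mul (hF.comp r hu))).add
      (((hasDerivAt_pow (n - 1) r).const_mul ((n : ℝ) - 2)).mul (hu.mul hu'))
  convert hG using 1
  obtain ⟨m, rfl⟩ : ∃ m, n = m + 1 := ⟨n - 1, by omega⟩
  have hode_mul_r : r * u'' r + m * u' r + r * f (u r) = 0 := by
    field_simp at hode
    push_cast at hode
    linarith
  simp only [Pi.pow_apply, Function.comp_apply, Nat.add_sub_cancel]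
  -- for `n = 1` the factor `rⁿ⁻²` is unavailable, so that case uses the undivided equation
  rcases m with _ | k
  · simp only [CharP.cast_eq_zero, zero_add, zero_mul, pow_zero]
    linear_combination (u r - 2 * r * u' r) * hode
  · simp only [Nat.add_sub_cancel, pow_succ]
    push_cast at hode_mul_r ⊢
    linear_combination (-(2 * r ^ (k + 1) * u' r) - k * r ^ k * u r) * hode_mul_r

theorem pohozhaevFunction_zero {n : ℕ} (hn : 2 ≤ n) (F u u' : ℝ → ℝ) :
    pohozhaevFunction n F u u' 0 = 0 := by
  simp [pohozhaevFunction, zero_pow (show n ≠ 0 by omega), zero_pow (show n - 1 ≠ 0 by omega)]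

theorem pohozhaevFunction_one {n : ℕ} {F u : ℝ → ℝ} (hF : F 0 = 0) (hu : u 1 = 0)
    (u' : ℝ → ℝ) : pohozhaevFunction n F u u' 1 = u' 1 ^ 2 := by
  simp [pohozhaevFunction, hF, hu]

theorem continuousOn_pohozhaevFunction {n : ℕ} {F u u' : ℝ → ℝ} {s : Set ℝ}
    (hF : Continuous F) (hu : ContinuousOn u s) (hu' : ContinuousOn u' s) :
    ContinuousOn (pohozhaevFunction n F u u') s := by
  unfold pohozhaevFunction
  fun_prop

theorem classical_pohozhaev_radial_general
    (n : ℕ) (hn : 3 ≤ n)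
    (f : ℝ → ℝ) (hf : ContDiff ℝ 1 f)
    (F : ℝ → ℝ) (hF : ∀ x : ℝ, F x = ∫ t in (0:ℝ)..x, f t)
    (u u' u'' : ℝ → ℝ)
    (hu : ∀ r ∈ Icc (0:ℝ) 1, HasDerivAt u (u' r) r)
    (hu' : ∀ r ∈ Icc (0:ℝ) 1, HasDerivAt u' (u'' r) r)
    (hode : ∀ r ∈ Ioo (0:ℝ) 1, u'' r + ((n : ℝ) - 1) / r * u' r + f (u r) = 0)
    (hbc1 : u 1 = 0) :
    ∫ r in (0:ℝ)..1,
        (2 * (n : ℝ) * F (u r) + (2 - (n : ℝ)) * u r * f (u r)) * r ^ (n - 1)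
      = (u' 1) ^ 2 := by
  have hfc : Continuous f := hf.continuous
  have hFf : ∀ x, HasDerivAt F (f x) x := fun x => by
    rw [funext hF]
    exact (hfc.integral_hasStrictDerivAt 0 x).hasDerivAt
  have hFc : Continuous F := continuous_iff_continuousAt.2 fun x => (hFf x).continuousAt
  have huc : ContinuousOn u (Icc 0 1) :=
    continuousOn_of_forall_continuousAt fun r hr => (hu r hr).continuousAt
  have hu'c : ContinuousOn u' (Icc 0 1) :=
    continuousOn_of_forall_continuousAt fun r hr => (hu' r hr).continuousAt
  have hint : IntervalIntegrable
      (fun r => (2 * (n : ℝ) * F (u r) + (2 - (n : ℝ)) * u r * f (u r)) * r ^ (n - 1))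
      MeasureTheory.volume 0 1 := by
    apply ContinuousOn.intervalIntegrable
    rw [uIcc_of_le zero_le_one]
    fun_prop
  rw [intervalIntegral.integral_eq_sub_of_hasDerivAt_of_le zero_le_one
      (continuousOn_pohozhaevFunction hFc huc hu'c)
      (fun r hr => hasDerivAt_pohozhaevFunction (by omega) hr.1.ne'
        (hu r (Ioo_subset_Icc_self hr)) (hu' r (Ioo_subset_Icc_self hr)) (hFf (u r)) (hode r hr))
      hint,
    pohozhaevFunction_one (by simp [hF]) hbc1, pohozhaevFunction_zero (by omega), sub_zero]

/-- The classical radial Pohozhaev identity (case `ψ(r) = r`):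
`∫₀¹ [2n F(u) + (2-n) u f(u)] r^{n-1} dr = u'(1)²`. -/
theorem classical_pohozhaev_radial
    (n : ℕ) (hn : 3 ≤ n)
    (f : ℝ → ℝ) (hf : ContDiff ℝ 1 f)
    (F : ℝ → ℝ) (hF : ∀ x : ℝ, F x = ∫ t in (0:ℝ)..x, f t)
    (u u' u'' : ℝ → ℝ)
    (hu : ∀ r ∈ Icc (0:ℝ) 1, HasDerivAt u (u' r) r)
    (hu' : ∀ r ∈ Icc (0:ℝ) 1, HasDerivAt u' (u'' r) r)
    (hu''c : ContinuousOn u'' (Icc (0:ℝ) 1))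
    (hode : ∀ r ∈ Ioo (0:ℝ) 1, u'' r + ((n : ℝ) - 1) / r * u' r + f (u r) = 0)
    (hbc0 : u' 0 = 0) (hbc1 : u 1 = 0) :
    ∫ r in (0:ℝ)..1,
        (2 * (n : ℝ) * F (u r) + (2 - (n : ℝ)) * u r * f (u r)) * r ^ (n - 1)
      = (u' 1) ^ 2 :=
  classical_pohozhaev_radial_general n hn f hf F hF u u' u'' hu hu' hode hbc1
end
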